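/- arXiv:1709.07661 — 5 statements merged into one kernel-verified Lean document; each statement's English description precedes it below -/
import Mathlib

section
/- Suppose in addition that there are σ > 1 such that V(y) ≥ 1 − y^{1−σ} for all y ≥ 1. Then for every i = 1,…,N−1 and every t ≥ 0 one has 1 ≤ y_i(t) ≤ (y_i(0)^σ + σt/ℓ)^{1/σ}. -/
/-!
Each follower moves at speed at most `(1 - V(y_i))/ℓ ≤ y_i^(1-σ)/ℓ`, so `y_i^σ` grows at
rate at most `σ y_i^(σ-1) · y_i^(1-σ)/ℓ = σ/ℓ`; integrating gives
`y_i(t)^σ ≤ y_i(0)^σ + σt/ℓ`.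
-/

open Set

theorem rpow_le_add_of_hasDerivAt_le_mul_rpow {f f' : ℝ → ℝ} {c σ : ℝ} (hσ : 0 < σ)
    (hf_pos : ∀ s, 0 ≤ s → 0 < f s) (hf : ∀ s, 0 ≤ s → HasDerivAt f (f' s) s)
    (hf'_le : ∀ s, 0 ≤ s → f' s ≤ c * f s ^ (1 - σ)) {t : ℝ} (ht : 0 ≤ t) :
    f t ^ σ ≤ f 0 ^ σ + σ * c * t := by
  have hg : ∀ s, 0 ≤ s → HasDerivAt (fun u => f u ^ σ - σ * c * u)
      (f' s * σ * f s ^ (σ - 1) - σ * c) s := fun s hs =>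
    ((hf s hs).rpow_const (Or.inl (hf_pos s hs).ne')).sub
      (by simpa using (hasDerivAt_id s).const_mul (σ * c))
  have hg'_nonpos : ∀ s, 0 ≤ s → f' s * σ * f s ^ (σ - 1) - σ * c ≤ 0 := by
    intro s hs
    have hpow : f s ^ (1 - σ) * f s ^ (σ - 1) = 1 := by
      rw [← Real.rpow_add (hf_pos s hs)]; norm_num
    have hprod : f' s * f s ^ (σ - 1) ≤ c :=
      calc f' s * f s ^ (σ - 1) ≤ c * f s ^ (1 - σ) * f s ^ (σ - 1) :=
            mul_le_mul_of_nonneg_right (hf'_le s hs) (Real.rpow_nonneg (hf_pos s hs).le _)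
        _ = c := by rw [mul_assoc, hpow, mul_one]
    nlinarith [mul_le_mul_of_nonneg_left hprod hσ.le]
  have hanti : AntitoneOn (fun u => f u ^ σ - σ * c * u) (Ici 0) := by
    refine antitoneOn_of_hasDerivWithinAt_nonpos
      (f' := fun s => f' s * σ * f s ^ (σ - 1) - σ * c) (convex_Ici 0)
      (fun s hs => (hg s hs).continuousAt.continuousWithinAt) (fun s hs => ?_) (fun s hs => ?_)
    · rw [interior_Ici] at hs
      exact (hg s (le_of_lt hs)).hasDerivWithinAt
    · rw [interior_Ici] at hs
      exact hg'_nonpos s (le_of_lt hs)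
  have := hanti (mem_Ici.mpr le_rfl) ht ht
  simp only [mul_zero, sub_zero] at this
  linarith

theorem ftl_velocity_le_rpow {N i : ℕ} {ℓ σ : ℝ} {V : ℝ → ℝ} {y : ℕ → ℝ → ℝ} {t : ℝ}
    (hℓ : 0 < ℓ) (hi : i ∈ Finset.Icc 1 (N - 1))
    (hV_range : ∀ x ∈ Ici (1:ℝ), V x ∈ Icc (0:ℝ) 1)
    (hy_ge1 : ∀ i ∈ Finset.Icc 1 (N - 1), ∀ t : ℝ, 0 ≤ t → 1 ≤ y i t) (ht : 0 ≤ t)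
    (hVlow : ∀ x : ℝ, 1 ≤ x → 1 - x ^ (1 - σ) ≤ V x) :
    ((if i + 1 = N then (1:ℝ) else V (y (i + 1) t)) - V (y i t)) / ℓ
      ≤ ℓ⁻¹ * y i t ^ (1 - σ) := by
  have hleader_le : (if i + 1 = N then (1:ℝ) else V (y (i + 1) t)) ≤ 1 := by
    split_ifs
    · exact le_rfl
    · have hi' : i + 1 ∈ Finset.Icc 1 (N - 1) := by
        simp only [Finset.mem_Icc] at hi ⊢
        omega
      exact (hV_range _ (hy_ge1 _ hi' t ht)).2
  have := hVlow _ (hy_ge1 i hi t ht)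
  rw [div_eq_inv_mul]
  exact mul_le_mul_of_nonneg_left (by linarith) (inv_nonneg.mpr hℓ.le)

theorem ftl_gap_upper_bound_general
    (N : ℕ)
    (ℓ : ℝ) (hℓ : ℓ = 1 / (N + 1))
    (V : ℝ → ℝ)
    (hV_range : ∀ x ∈ Set.Ici (1:ℝ), V x ∈ Set.Icc (0:ℝ) 1)
    (y : ℕ → ℝ → ℝ)
    (hy_ge1 : ∀ i ∈ Finset.Icc 1 (N-1), ∀ t : ℝ, 0 ≤ t → 1 ≤ y i t)
    (hODE : ∀ i ∈ Finset.Icc 1 (N-1), ∀ t : ℝ, 0 ≤ t →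
      HasDerivAt (y i) (((if i + 1 = N then (1:ℝ) else V (y (i+1) t)) - V (y i t)) / ℓ) t)
    (σ : ℝ) (hσ : 1 < σ)
    (hVlow : ∀ x : ℝ, 1 ≤ x → 1 - x ^ (1 - σ) ≤ V x) :
    ∀ i ∈ Finset.Icc 1 (N-1), ∀ t : ℝ, 0 ≤ t →
      1 ≤ y i t ∧ y i t ≤ (y i 0 ^ σ + σ * t / ℓ) ^ (1/σ) := by
  have hℓpos : 0 < ℓ := by rw [hℓ]; positivity
  have hσpos : 0 < σ := by linarith
  intro i hi t ht
  have hy_pos : ∀ s, 0 ≤ s → 0 < y i s := fun s hs => one_pos.trans_le (hy_ge1 i hi s hs)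
  have hpow_le : y i t ^ σ ≤ y i 0 ^ σ + σ * t / ℓ :=
    calc y i t ^ σ ≤ y i 0 ^ σ + σ * ℓ⁻¹ * t :=
          rpow_le_add_of_hasDerivAt_le_mul_rpow hσpos hy_pos (hODE i hi)
            (fun s hs => ftl_velocity_le_rpow hℓpos hi hV_range hy_ge1 hs hVlow) ht
      _ = y i 0 ^ σ + σ * t / ℓ := by ring
  refine ⟨hy_ge1 i hi t ht, ?_⟩
  rw [one_div, Real.le_rpow_inv_iff_of_pos (hy_pos t ht).le
    ((Real.rpow_nonneg (hy_pos t ht).le σ).trans hpow_le) hσpos]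
  exact hpow_le

/-- **Lemma 2.1, estimate (2.2).**
Context: `N ≥ 2`, `ℓ = 1/(N+1)`; `V : [1,∞) → [0,1]` is `C¹`, nondecreasing, `V 1 = 0`;
`y_1, …, y_{N-1} : [0,∞) → [1,∞)` solve the Follow-the-Leader system
`ẏ_i = (V_{i+1} - V_i)/ℓ` with `V_i = V (y_i)` and `V_N = 1`, and `y_i 0 ≥ 1`.
Statement: if moreover `V y ≥ 1 - y^(1-σ)` on `[1,∞)` for some `σ > 1`, then
`1 ≤ y_i t ≤ (y_i 0 ^ σ + σ t / ℓ)^(1/σ)` for all `i = 1, …, N-1` and `t ≥ 0`. -/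
theorem ftl_gap_upper_bound
    (N : ℕ) (hN : 2 ≤ N)
    (ℓ : ℝ) (hℓ : ℓ = 1 / (N + 1))
    (V : ℝ → ℝ)
    (hV_C1 : ContDiffOn ℝ 1 V (Set.Ici 1))
    (hV_mono : MonotoneOn V (Set.Ici 1))
    (hV_range : ∀ x ∈ Set.Ici (1:ℝ), V x ∈ Set.Icc (0:ℝ) 1)
    (hV1 : V 1 = 0)
    (y : ℕ → ℝ → ℝ)
    (hy_ge1 : ∀ i ∈ Finset.Icc 1 (N-1), ∀ t : ℝ, 0 ≤ t → 1 ≤ y i t)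
    (hODE : ∀ i ∈ Finset.Icc 1 (N-1), ∀ t : ℝ, 0 ≤ t →
      HasDerivAt (y i) (((if i + 1 = N then (1:ℝ) else V (y (i+1) t)) - V (y i t)) / ℓ) t)
    (σ : ℝ) (hσ : 1 < σ)
    (hVlow : ∀ x : ℝ, 1 ≤ x → 1 - x ^ (1 - σ) ≤ V x) :
    ∀ i ∈ Finset.Icc 1 (N-1), ∀ t : ℝ, 0 ≤ t →
      1 ≤ y i t ∧ y i t ≤ (y i 0 ^ σ + σ * t / ℓ) ^ (1/σ) :=
  ftl_gap_upper_bound_general N ℓ hℓ V hV_range y hy_ge1 hODE σ hσ hVlow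
end

section
/- For all 0 ≤ s ≤ t one has Σ_{i=1}^{N−1} |V_{i+1}(t) − V_i(t)| ≤ Σ_{i=1}^{N−1} |V_{i+1}(s) − V_i(s)|; in particular the discrete total variation of the velocities V_i is nonincreasing in time. -/
/-!
Write `d_i = V_{i+1} - V_i`. Since `|x| = max (x, -x)`, the total variation `∑ |d_i|` is the
maximum of the finitely many differentiable functions `∑ σ_i d_i`, `σ ∈ {±1}^{N-1}`. Along the flow
`V̇_i = e_i := V'(y_i) d_i / ℓ`, so `ḋ_i = e_{i+1} - e_i` with `e_N = 0`. At a time where `σ`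
realises the maximum, `σ_i d_i = |d_i|`, hence `σ_i e_i = |e_i|` because `V' ≥ 0`, and the
derivative `∑ σ_i (e_{i+1} - e_i) ≤ ∑ (|e_{i+1}| - |e_i|) = |e_N| - |e_1|` is `≤ 0`. A maximum of
finitely many functions, each nonincreasing at the times where it is the maximal one, is
nonincreasing; this is a right Dini-derivative comparison.
-/

open Set Filter Topology

theorem le_of_eq_branch_of_deriv_nonpos {ι : Type*} {S : Finset ι} {F : ℝ → ℝ}
    {g g' : ι → ℝ → ℝ} {a b : ℝ} (hab : a ≤ b) (hF : ContinuousOn F (Icc a b))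
    (hFg : ∀ x ∈ Ico a b, ∃ i ∈ S, F x = g i x)
    (hg : ∀ i ∈ S, ∀ x ∈ Ico a b, HasDerivWithinAt (g i) (g' i x) (Ioi x) x)
    (hg' : ∀ i ∈ S, ∀ x ∈ Ico a b, F x = g i x → g' i x ≤ 0) :
    F b ≤ F a := by
  refine image_le_of_liminf_slope_right_le_deriv_boundary (B := fun _ => F a) (B' := 0) hF le_rfl
    continuousOn_const (fun x _ => hasDerivWithinAt_const x _ (F a)) ?_ ⟨hab, le_rfl⟩
  intro x hx r hr
  obtain ⟨i, hi, hfreq⟩ : ∃ i ∈ S, ∃ᶠ z in 𝓝[>] x, F z = g i z := by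
    rw [← Finset.frequently_exists]
    refine Eventually.frequently ?_
    filter_upwards [Ioo_mem_nhdsGT hx.2] with z hz using hFg z ⟨hx.1.trans hz.1.le, hz.2⟩
  have hFx : F x = g i x :=
    tendsto_nhds_unique_of_frequently_eq
      ((hF x (Ico_subset_Icc_self hx)).mono_of_mem_nhdsWithin (Icc_mem_nhdsGT_of_mem hx))
      (hg i hi x hx).continuousWithinAt hfreq
  have hslope : ∀ᶠ z in 𝓝[>] x, slope (g i) x z < r :=
    ((hasDerivWithinAt_iff_tendsto_slope' (lt_irrefl x)).1 (hg i hi x hx)).eventually_lt_const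
      ((hg' i hi x hx hFx).trans_lt hr)
  refine (hfreq.and_eventually hslope).mono fun z ⟨hFz, hz⟩ => ?_
  rwa [slope_def_field, hFz, hFx, ← slope_def_field]

section SignVectors

variable {α : Type*} [DecidableEq α]

def signVec (A : Finset α) (i : α) : ℝ := if i ∈ A then 1 else -1

theorem abs_signVec (A : Finset α) (i : α) : |signVec A i| = 1 := by
  unfold signVec; split_ifs <;> simp

theorem exists_sum_abs_eq_sum_signVec_mul (I : Finset α) (x : α → ℝ) :
    ∃ A ∈ I.powerset, ∑ i ∈ I, |x i| = ∑ i ∈ I, signVec A i * x i := by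
  refine ⟨I.filter (fun i => 0 ≤ x i), Finset.mem_powerset.2 (Finset.filter_subset _ _), ?_⟩
  refine Finset.sum_congr rfl fun i hi => ?_
  by_cases h : 0 ≤ x i
  · simp [signVec, hi, h, abs_of_nonneg h]
  · simp [signVec, h, abs_of_neg (not_le.1 h)]

theorem signVec_mul_le_abs (A : Finset α) (i : α) (x : ℝ) : signVec A i * x ≤ |x| :=
  (le_abs_self _).trans (by rw [abs_mul, abs_signVec, one_mul])

theorem signVec_mul_eq_abs_of_sum_eq {I A : Finset α} {x : α → ℝ}
    (h : ∑ i ∈ I, signVec A i * x i = ∑ i ∈ I, |x i|) :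
    ∀ i ∈ I, signVec A i * x i = |x i| :=
  (Finset.sum_eq_sum_iff_of_le fun i _ => signVec_mul_le_abs A i (x i)).1 h

end SignVectors

theorem sum_mul_sub_le_abs_sub_abs (n : ℕ) {σ e : ℕ → ℝ} (hσ : ∀ i ∈ Finset.Icc 1 n, |σ i| ≤ 1)
    (hσe : ∀ i ∈ Finset.Icc 1 n, σ i * e i = |e i|) :
    ∑ i ∈ Finset.Icc 1 n, σ i * (e (i + 1) - e i) ≤ |e (n + 1)| - |e 1| :=
  calc ∑ i ∈ Finset.Icc 1 n, σ i * (e (i + 1) - e i)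
      ≤ ∑ i ∈ Finset.Icc 1 n, (|e (i + 1)| - |e i|) := Finset.sum_le_sum fun i hi => by
        have hnext : σ i * e (i + 1) ≤ |e (i + 1)| := (le_abs_self _).trans <| by
          rw [abs_mul]; exact mul_le_of_le_one_left (abs_nonneg _) (hσ i hi)
        linarith [hσe i hi]
    _ = |e (n + 1)| - |e 1| := by
        rw [← Finset.Ico_add_one_right_eq_Icc, Finset.sum_Ico_sub (fun j => |e j|) (by omega)]

def discreteTV (n : ℕ) (v : ℕ → ℝ) : ℝ := ∑ i ∈ Finset.Icc 1 n, |v (i + 1) - v i|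

theorem discreteTV_le_of_hasDerivWithinAt_chain {n : ℕ} {u c : ℕ → ℝ → ℝ} {a b : ℝ}
    (hab : a ≤ b)
    (hu : ∀ j ∈ Finset.Icc 1 n, ∀ x ∈ Icc a b,
      HasDerivWithinAt (u j) (c j x * (u (j + 1) x - u j x)) (Icc a b) x)
    (hc : ∀ j ∈ Finset.Icc 1 n, ∀ x ∈ Icc a b, 0 ≤ c j x)
    (hlast : ∀ x ∈ Icc a b, HasDerivWithinAt (u (n + 1)) 0 (Icc a b) x) :
    discreteTV n (u · b) ≤ discreteTV n (u · a) := by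
  set d : ℕ → ℝ → ℝ := fun i x => u (i + 1) x - u i x
  set w : ℕ → ℝ → ℝ := fun j x => if j = n + 1 then 0 else c j x * d j x
  have hw : ∀ j ∈ Finset.Icc 1 (n + 1), ∀ x ∈ Icc a b,
      HasDerivWithinAt (u j) (w j x) (Icc a b) x := by
    intro j hj x hx
    by_cases hjn : j = n + 1
    · subst hjn; simpa [w] using hlast x hx
    · simpa [w, hjn] using hu j (by simp only [Finset.mem_Icc] at hj ⊢; omega) x hx
  have hd : ∀ i ∈ Finset.Icc 1 n, ∀ x ∈ Icc a b,
      HasDerivWithinAt (d i) (w (i + 1) x - w i x) (Icc a b) x := fun i hi x hx =>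
    (hw (i + 1) (by simp only [Finset.mem_Icc] at hi ⊢; omega) x hx).sub
      (hw i (by simp only [Finset.mem_Icc] at hi ⊢; omega) x hx)
  refine le_of_eq_branch_of_deriv_nonpos (S := (Finset.Icc 1 n).powerset)
    (g := fun A x => ∑ i ∈ Finset.Icc 1 n, signVec A i * d i x)
    (g' := fun A x => ∑ i ∈ Finset.Icc 1 n, signVec A i * (w (i + 1) x - w i x)) hab ?_
    (fun x _ => exists_sum_abs_eq_sum_signVec_mul _ _) ?_ ?_
  · refine continuousOn_finsetSum _ fun i hi => ContinuousOn.abs ?_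
    exact fun x hx => (hd i hi x hx).continuousWithinAt
  · intro A _ x hx
    exact (HasDerivWithinAt.fun_sum fun i hi => (hd i hi x (Ico_subset_Icc_self hx)).const_mul _)
      |>.mono_of_mem_nhdsWithin (Icc_mem_nhdsGT_of_mem hx)
  · intro A _ x hx hFx
    have hactive := signVec_mul_eq_abs_of_sum_eq hFx.symm
    have hw_active : ∀ i ∈ Finset.Icc 1 n, signVec A i * w i x = |w i x| := fun i hi => by
      have hin : i ≠ n + 1 := by simp only [Finset.mem_Icc] at hi; omega
      rw [show w i x = c i x * d i x from if_neg hin, abs_mul,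
        abs_of_nonneg (hc i hi x (Ico_subset_Icc_self hx)), ← hactive i hi]
      ring
    calc ∑ i ∈ Finset.Icc 1 n, signVec A i * (w (i + 1) x - w i x)
        ≤ |w (n + 1) x| - |w 1 x| :=
          sum_mul_sub_le_abs_sub_abs n (fun i _ => (abs_signVec A i).le) hw_active
      _ ≤ 0 := by simp [w]

theorem ftl_velocity_tv_nonincreasing_general
    (N : ℕ) (hN : 2 ≤ N)
    (ℓ : ℝ) (hℓ : ℓ = 1 / (N + 1))
    (V : ℝ → ℝ)
    (hV_C1 : ContDiffOn ℝ 1 V (Set.Ici 1))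
    (hV_mono : MonotoneOn V (Set.Ici 1))
    (y : ℕ → ℝ → ℝ)
    (hy_ge1 : ∀ i ∈ Finset.Icc 1 (N-1), ∀ t : ℝ, 0 ≤ t → 1 ≤ y i t)
    (hODE : ∀ i ∈ Finset.Icc 1 (N-1), ∀ t : ℝ, 0 ≤ t →
      HasDerivAt (y i) (((if i + 1 = N then (1:ℝ) else V (y (i+1) t)) - V (y i t)) / ℓ) t) :
    ∀ s t : ℝ, 0 ≤ s → s ≤ t →
      ∑ i ∈ Finset.Icc 1 (N-1),
          |(if i + 1 = N then (1:ℝ) else V (y (i+1) t)) - V (y i t)|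
        ≤ ∑ i ∈ Finset.Icc 1 (N-1),
            |(if i + 1 = N then (1:ℝ) else V (y (i+1) s)) - V (y i s)| := by
  intro s t hs hst
  have hℓ_pos : 0 < ℓ := by rw [hℓ]; positivity
  have hne_N : ∀ i ∈ Finset.Icc 1 (N - 1), i ≠ N := fun i hi => by
    simp only [Finset.mem_Icc] at hi; omega
  -- the leader's velocity `V_N = 1` is the last member of the chain
  set u : ℕ → ℝ → ℝ := fun j τ => if j = N then 1 else V (y j τ)
  have htv : ∀ τ, discreteTV (N - 1) (u · τ) = ∑ i ∈ Finset.Icc 1 (N-1),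
      |(if i + 1 = N then (1:ℝ) else V (y (i+1) τ)) - V (y i τ)| := fun τ =>
    Finset.sum_congr rfl fun i hi => by simp [u, hne_N i hi]
  rw [← htv, ← htv]
  refine discreteTV_le_of_hasDerivWithinAt_chain
    (c := fun j τ => derivWithin V (Ici 1) (y j τ) / ℓ) hst (fun j hj x hx => ?_)
    (fun j _ x _ => div_nonneg hV_mono.derivWithin_nonneg hℓ_pos.le) (fun x _ => ?_)
  · have hy : MapsTo (y j) (Icc s t) (Ici 1) := fun τ hτ => hy_ge1 j hj τ (hs.trans hτ.1)
    have hVy := ((hV_C1.differentiableOn one_ne_zero _ (hy hx)).hasDerivWithinAt).comp x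
      (hODE j hj x (hs.trans hx.1)).hasDerivWithinAt hy
    simp only [u, if_neg (hne_N j hj)]
    exact hVy.congr_deriv (by ring)
  · simpa [u, Nat.sub_add_cancel (by omega : 1 ≤ N)] using hasDerivWithinAt_const x _ (1 : ℝ)

/-- **Lemma 2.2, estimate (2.8) for the velocities.**
Context: `N ≥ 2`, `ℓ = 1/(N+1)`; `V : [1,∞) → [0,1]` is `C¹`, nondecreasing, `V 1 = 0`;
`y_1, …, y_{N-1} : [0,∞) → [1,∞)` solve `ẏ_i = (V_{i+1} - V_i)/ℓ`, `V_i = V (y_i)`,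
`V_N = 1`.  Statement: for `0 ≤ s ≤ t`,
`∑_{i=1}^{N-1} |V_{i+1}(t) - V_i(t)| ≤ ∑_{i=1}^{N-1} |V_{i+1}(s) - V_i(s)|`:
the discrete total variation of the velocities is nonincreasing in time. -/
theorem ftl_velocity_tv_nonincreasing
    (N : ℕ) (hN : 2 ≤ N)
    (ℓ : ℝ) (hℓ : ℓ = 1 / (N + 1))
    (V : ℝ → ℝ)
    (hV_C1 : ContDiffOn ℝ 1 V (Set.Ici 1))
    (hV_mono : MonotoneOn V (Set.Ici 1))
    (hV_range : ∀ x ∈ Set.Ici (1:ℝ), V x ∈ Set.Icc (0:ℝ) 1)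
    (hV1 : V 1 = 0)
    (y : ℕ → ℝ → ℝ)
    (hy_ge1 : ∀ i ∈ Finset.Icc 1 (N-1), ∀ t : ℝ, 0 ≤ t → 1 ≤ y i t)
    (hODE : ∀ i ∈ Finset.Icc 1 (N-1), ∀ t : ℝ, 0 ≤ t →
      HasDerivAt (y i) (((if i + 1 = N then (1:ℝ) else V (y (i+1) t)) - V (y i t)) / ℓ) t) :
    ∀ s t : ℝ, 0 ≤ s → s ≤ t →
      ∑ i ∈ Finset.Icc 1 (N-1),
          |(if i + 1 = N then (1:ℝ) else V (y (i+1) t)) - V (y i t)|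
        ≤ ∑ i ∈ Finset.Icc 1 (N-1),
            |(if i + 1 = N then (1:ℝ) else V (y (i+1) s)) - V (y i s)| :=
  ftl_velocity_tv_nonincreasing_general N hN ℓ hℓ V hV_C1 hV_mono y hy_ge1 hODE
end

section
/- For all 0 ≤ s ≤ t one has Σ_{i=1}^{N−1} |ρ_{i+1}(t) − ρ_i(t)| ≤ Σ_{i=1}^{N−1} |ρ_{i+1}(s) − ρ_i(s)|; in particular the discrete total variation of the densities ρ_i = 1/y_i is nonincreasing in time. -/
open Set Filter Topology

/-!
Write `g_i = ρ_{i+1} - ρ_i` and `f_i = -ρ̇_i = ρ_i² (V_{i+1} - V_i) / ℓ`, so that `ġ_i = f_i - f_{i+1}`.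
Since `ρ = 1 / y` decreases and `V` does not decrease in the spacing `y`, `sign g_i · f_i = -|f_i|`; hence
the right derivative of `|g_i|` is at most `|f_{i+1}| - |f_i|`. Summing over `i` telescopes to
`|f_N| - |f_1| ≤ 0`, because the leader's density `ρ_N = 0` is constant, and a function with
nonpositive right derivative is nonincreasing.
-/

noncomputable def absRightDeriv (v d : ℝ) : ℝ :=
  if v = 0 then |d| else SignType.sign v * d

theorem HasDerivAt.hasDerivWithinAt_abs_Ici {g : ℝ → ℝ} {g' x : ℝ} (hg : HasDerivAt g g' x) :
    HasDerivWithinAt (fun z => |g z|) (absRightDeriv (g x) g') (Ici x) x := by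
  by_cases hgx : g x = 0
  · rw [absRightDeriv, if_pos hgx, hasDerivWithinAt_iff_tendsto_slope, Ici_sdiff_left]
    have hslope : Tendsto (slope g x) (𝓝[>] x) (𝓝 g') :=
      (hasDerivAt_iff_tendsto_slope.mp hg).mono_left (nhdsWithin_mono x fun z hz => ne_of_gt hz)
    refine hslope.abs.congr' ?_
    filter_upwards [self_mem_nhdsWithin] with z (hz : x < z)
    rw [slope_def_field, slope_def_field, hgx, abs_zero, sub_zero, sub_zero, abs_div,
      abs_of_pos (sub_pos.mpr hz)]
  · rw [absRightDeriv, if_neg hgx]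
    exact ((hasDerivAt_abs hgx).comp x hg).hasDerivWithinAt

theorem absRightDeriv_sub_le {v a b : ℝ} (h : (SignType.sign v : ℝ) * a = -|a|) :
    absRightDeriv v (a - b) ≤ |b| - |a| := by
  rw [absRightDeriv]
  split_ifs with hv
  · rw [hv, sign_zero, SignType.coe_zero, zero_mul, zero_eq_neg, abs_eq_zero] at h
    simp [h]
  · have hσ : |(SignType.sign v : ℝ)| = 1 := by
      rcases lt_or_gt_of_ne hv with hv | hv <;> simp [hv]
    have hb : -((SignType.sign v : ℝ) * b) ≤ |b| := by
      simpa [abs_mul, hσ] using neg_le_abs ((SignType.sign v : ℝ) * b)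
    rw [mul_sub, h]
    linarith

theorem antitoneOn_of_hasDerivWithinAt_Ici_nonpos {f f' : ℝ → ℝ} {s : Set ℝ}
    (hs : s.OrdConnected) (hf : ContinuousOn f s)
    (hf' : ∀ x ∈ s, HasDerivWithinAt f (f' x) (Ici x) x) (hf'_nonpos : ∀ x ∈ s, f' x ≤ 0) :
    AntitoneOn f s := by
  intro a ha b hb hab
  have hsub : Icc a b ⊆ s := hs.out ha hb
  exact image_le_of_deriv_right_le_deriv_boundary (B := fun _ => f a) (hf.mono hsub)
    (fun x hx => hf' x (hsub (Ico_subset_Icc_self hx))) le_rfl continuousOn_const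
    (fun x _ => hasDerivWithinAt_const x _ _)
    (fun x hx => hf'_nonpos x (hsub (Ico_subset_Icc_self hx))) (right_mem_Icc.mpr hab)

theorem sum_Ico_sub_nonpos {h : ℕ → ℝ} {N : ℕ} (h₁ : 0 ≤ h 1) (hN : h N = 0) :
    ∑ i ∈ Finset.Ico 1 N, (h (i + 1) - h i) ≤ 0 := by
  rcases Nat.eq_zero_or_pos N with rfl | hN1
  · simp
  · rw [Finset.sum_Ico_sub h hN1, hN]
    linarith

theorem antitoneOn_sum_abs_sub {N : ℕ} {ρ f : ℕ → ℝ → ℝ} {s : Set ℝ} (hs : s.OrdConnected)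
    (hρ : ∀ i ∈ Finset.Icc 1 N, ∀ t ∈ s, HasDerivAt (ρ i) (-f i t) t)
    (hfN : ∀ t ∈ s, f N t = 0)
    (hsign : ∀ i ∈ Finset.Ico 1 N, ∀ t ∈ s,
      (SignType.sign (ρ (i + 1) t - ρ i t) : ℝ) * f i t = -|f i t|) :
    AntitoneOn (fun t => ∑ i ∈ Finset.Ico 1 N, |ρ (i + 1) t - ρ i t|) s := by
  have hgap : ∀ i ∈ Finset.Ico 1 N, ∀ t ∈ s,
      HasDerivAt (fun t => ρ (i + 1) t - ρ i t) (f i t - f (i + 1) t) t := by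
    intro i hi t ht
    obtain ⟨hi1, hiN⟩ := Finset.mem_Ico.mp hi
    have h := (hρ (i + 1) (Finset.mem_Icc.mpr ⟨by omega, hiN⟩) t ht).sub
      (hρ i (Finset.mem_Icc.mpr ⟨hi1, hiN.le⟩) t ht)
    rwa [neg_sub_neg] at h
  refine antitoneOn_of_hasDerivWithinAt_Ici_nonpos hs ?_
    (fun t ht => HasDerivWithinAt.fun_sum fun i hi => (hgap i hi t ht).hasDerivWithinAt_abs_Ici)
    (fun t ht => ?_)
  · exact continuousOn_finsetSum _ fun i hi t ht =>
      (hgap i hi t ht).continuousAt.continuousWithinAt.abs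
  · calc ∑ i ∈ Finset.Ico 1 N, absRightDeriv (ρ (i + 1) t - ρ i t) (f i t - f (i + 1) t)
        ≤ ∑ i ∈ Finset.Ico 1 N, (|f (i + 1) t| - |f i t|) :=
          Finset.sum_le_sum fun i hi => absRightDeriv_sub_le (hsign i hi t ht)
      _ ≤ 0 := sum_Ico_sub_nonpos (h := fun i => |f i t|) (abs_nonneg _) (by simp [hfN t ht])

theorem sign_one_div_sub_one_div {u v : ℝ} (hu : 0 < u) (hv : 0 < v) :
    SignType.sign (1 / u - 1 / v) = SignType.sign (v - u) := by
  rw [div_sub_div _ _ hu.ne' hv.ne', one_mul, mul_one, div_eq_mul_inv, sign_mul,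
    sign_pos (by positivity : 0 < (u * v)⁻¹), mul_one]

theorem MonotoneOn.sign_sub_mul_sub {V : ℝ → ℝ} {s : Set ℝ} (hV : MonotoneOn V s) {u v : ℝ}
    (hu : u ∈ s) (hv : v ∈ s) : (SignType.sign (u - v) : ℝ) * (V u - V v) = |V u - V v| := by
  rcases lt_trichotomy u v with huv | rfl | huv
  · have := hV hu hv huv.le
    rw [sign_neg (sub_neg.mpr huv), abs_of_nonpos (sub_nonpos.mpr this)]
    simp
  · simp
  · have := hV hv hu huv.le
    rw [sign_pos (sub_pos.mpr huv), abs_of_nonneg (sub_nonneg.mpr this)]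
    simp

noncomputable def ftlDensity (N : ℕ) (y : ℕ → ℝ → ℝ) (i : ℕ) (t : ℝ) : ℝ :=
  if i = N then 0 else 1 / y i t

/-- `-ρ̇_i`, with the leader's velocity `V_N = 1`. -/
noncomputable def ftlFlux (N : ℕ) (ℓ : ℝ) (V : ℝ → ℝ) (y : ℕ → ℝ → ℝ) (i : ℕ) (t : ℝ) : ℝ :=
  if i = N then 0 else
    ftlDensity N y i t ^ 2 / ℓ * ((if i + 1 = N then 1 else V (y (i + 1) t)) - V (y i t))

theorem hasDerivAt_ftlDensity {N : ℕ} {ℓ : ℝ} {V : ℝ → ℝ} {y : ℕ → ℝ → ℝ}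
    (hy_ge1 : ∀ i ∈ Finset.Icc 1 (N - 1), ∀ t : ℝ, 0 ≤ t → 1 ≤ y i t)
    (hODE : ∀ i ∈ Finset.Icc 1 (N - 1), ∀ t : ℝ, 0 ≤ t →
      HasDerivAt (y i) (((if i + 1 = N then (1 : ℝ) else V (y (i + 1) t)) - V (y i t)) / ℓ) t)
    {i : ℕ} (hi : i ∈ Finset.Icc 1 N) {t : ℝ} (ht : 0 ≤ t) :
    HasDerivAt (ftlDensity N y i) (-ftlFlux N ℓ V y i t) t := by
  by_cases hiN : i = N
  · have hρ : ftlDensity N y i = fun _ => 0 := funext fun _ => if_pos hiN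
    rw [hρ, ftlFlux, if_pos hiN, neg_zero]
    exact hasDerivAt_const t 0
  have hi' : i ∈ Finset.Icc 1 (N - 1) := by
    simp only [Finset.mem_Icc] at hi ⊢; omega
  have hy0 : y i t ≠ 0 := (zero_lt_one.trans_le (hy_ge1 i hi' t ht)).ne'
  have hρ : ftlDensity N y i = fun t => (y i t)⁻¹ := by funext t; simp [ftlDensity, hiN]
  rw [hρ]
  refine ((hODE i hi' t ht).fun_inv hy0).congr_deriv ?_
  simp only [ftlFlux, hρ, if_neg hiN]
  field_simp

theorem sign_ftlDensity_gap_mul_ftlFlux {N : ℕ} {ℓ : ℝ} {V : ℝ → ℝ} {y : ℕ → ℝ → ℝ} {t : ℝ}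
    (hℓ : 0 < ℓ) (hV_mono : MonotoneOn V (Ici 1)) (hV_le : ∀ x ∈ Ici (1 : ℝ), V x ≤ 1)
    (hy : ∀ j ∈ Finset.Icc 1 (N - 1), 1 ≤ y j t) {i : ℕ} (hi : i ∈ Finset.Ico 1 N) :
    (SignType.sign (ftlDensity N y (i + 1) t - ftlDensity N y i t) : ℝ) * ftlFlux N ℓ V y i t =
      -|ftlFlux N ℓ V y i t| := by
  obtain ⟨hi1, hiN⟩ := Finset.mem_Ico.mp hi
  have hyi : 1 ≤ y i t := hy i (Finset.mem_Icc.mpr ⟨hi1, by omega⟩)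
  simp only [ftlFlux, ftlDensity, if_neg hiN.ne]
  rw [mul_left_comm, abs_mul, abs_of_nonneg (by positivity), ← mul_neg]
  congr 1
  split_ifs with hlast
  · rw [zero_sub, sign_neg (neg_neg_of_pos (by positivity)),
      abs_of_nonneg (sub_nonneg.mpr (hV_le _ hyi))]
    simp
  · have hyi' : 1 ≤ y (i + 1) t := hy (i + 1) (Finset.mem_Icc.mpr ⟨by omega, by omega⟩)
    rw [sign_one_div_sub_one_div (by positivity) (by positivity), ← neg_sub (y (i + 1) t),
      Left.sign_neg, SignType.coe_neg, neg_mul, hV_mono.sign_sub_mul_sub hyi' hyi]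

theorem ftl_density_tv_nonincreasing_general
    (N : ℕ)
    (ℓ : ℝ) (hℓ : ℓ = 1 / (N + 1))
    (V : ℝ → ℝ)
    (hV_mono : MonotoneOn V (Set.Ici 1))
    (hV_range : ∀ x ∈ Set.Ici (1:ℝ), V x ∈ Set.Icc (0:ℝ) 1)
    (y : ℕ → ℝ → ℝ)
    (hy_ge1 : ∀ i ∈ Finset.Icc 1 (N-1), ∀ t : ℝ, 0 ≤ t → 1 ≤ y i t)
    (hODE : ∀ i ∈ Finset.Icc 1 (N-1), ∀ t : ℝ, 0 ≤ t →
      HasDerivAt (y i) (((if i + 1 = N then (1:ℝ) else V (y (i+1) t)) - V (y i t)) / ℓ) t) :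
    ∀ s t : ℝ, 0 ≤ s → s ≤ t →
      ∑ i ∈ Finset.Icc 1 (N-1),
          |(if i + 1 = N then (0:ℝ) else 1 / y (i+1) t) - 1 / y i t|
        ≤ ∑ i ∈ Finset.Icc 1 (N-1),
            |(if i + 1 = N then (0:ℝ) else 1 / y (i+1) s) - 1 / y i s| := by
  intro s t hs hst
  have hℓ_pos : 0 < ℓ := by rw [hℓ]; positivity
  have hTV : ∀ τ : ℝ, ∑ i ∈ Finset.Icc 1 (N - 1),
      |(if i + 1 = N then (0 : ℝ) else 1 / y (i + 1) τ) - 1 / y i τ| =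
        ∑ i ∈ Finset.Ico 1 N, |ftlDensity N y (i + 1) τ - ftlDensity N y i τ| := by
    intro τ
    have hIcc : Finset.Icc 1 (N - 1) = Finset.Ico 1 N := by
      ext i; simp only [Finset.mem_Icc, Finset.mem_Ico]; omega
    rw [hIcc]
    refine Finset.sum_congr rfl fun i hi => ?_
    simp [ftlDensity, (Finset.mem_Ico.mp hi).2.ne]
  rw [hTV, hTV]
  refine antitoneOn_sum_abs_sub ordConnected_Ici
    (fun i hi τ hτ => hasDerivAt_ftlDensity hy_ge1 hODE hi hτ) (fun τ _ => if_pos rfl)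
    (fun i hi τ hτ => sign_ftlDensity_gap_mul_ftlFlux hℓ_pos hV_mono
      (fun x hx => (hV_range x hx).2) (fun j hj => hy_ge1 j hj τ hτ) hi)
    hs (hs.trans hst) hst

/-- **Lemma 2.2, estimate (2.9) for the densities.**
Context: `N ≥ 2`, `ℓ = 1/(N+1)`; `V : [1,∞) → [0,1]` is `C¹`, nondecreasing, `V 1 = 0`;
`y_1, …, y_{N-1} : [0,∞) → [1,∞)` solve `ẏ_i = (V_{i+1} - V_i)/ℓ`, `V_i = V (y_i)`,
`V_N = 1`; `ρ_i = 1/y_i` for `1 ≤ i ≤ N-1` and `ρ_N = 0`.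
Statement: for `0 ≤ s ≤ t`,
`∑_{i=1}^{N-1} |ρ_{i+1}(t) - ρ_i(t)| ≤ ∑_{i=1}^{N-1} |ρ_{i+1}(s) - ρ_i(s)|`:
the discrete total variation of the densities is nonincreasing in time. -/
theorem ftl_density_tv_nonincreasing
    (N : ℕ) (hN : 2 ≤ N)
    (ℓ : ℝ) (hℓ : ℓ = 1 / (N + 1))
    (V : ℝ → ℝ)
    (hV_C1 : ContDiffOn ℝ 1 V (Set.Ici 1))
    (hV_mono : MonotoneOn V (Set.Ici 1))
    (hV_range : ∀ x ∈ Set.Ici (1:ℝ), V x ∈ Set.Icc (0:ℝ) 1)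
    (hV1 : V 1 = 0)
    (y : ℕ → ℝ → ℝ)
    (hy_ge1 : ∀ i ∈ Finset.Icc 1 (N-1), ∀ t : ℝ, 0 ≤ t → 1 ≤ y i t)
    (hODE : ∀ i ∈ Finset.Icc 1 (N-1), ∀ t : ℝ, 0 ≤ t →
      HasDerivAt (y i) (((if i + 1 = N then (1:ℝ) else V (y (i+1) t)) - V (y i t)) / ℓ) t) :
    ∀ s t : ℝ, 0 ≤ s → s ≤ t →
      ∑ i ∈ Finset.Icc 1 (N-1),
          |(if i + 1 = N then (0:ℝ) else 1 / y (i+1) t) - 1 / y i t|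
        ≤ ∑ i ∈ Finset.Icc 1 (N-1),
            |(if i + 1 = N then (0:ℝ) else 1 / y (i+1) s) - 1 / y i s| :=
  ftl_density_tv_nonincreasing_general N ℓ hℓ V hV_mono hV_range y hy_ge1 hODE
end

section
/- For every t ≥ 0 one has ∫_ℝ ρ_ℓ(t,z) dz = (N−1)ℓ; in particular the total mass of ρ_ℓ is conserved in time and ‖ρ_ℓ(t,·)‖_{L¹(ℝ)} ≤ 1. -/
/-!
The two ODEs make `z_{i+1/2} - z_{i-1/2} - ℓ y_i` stationary, so the cell
`[z_{i-1/2}, z_{i+1/2})` keeps length `ℓ y_i(t)` and carries mass `ρ_i ℓ y_i = ℓ` for all time.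
Summing over the `N - 1` cells gives `(N - 1) ℓ = (N - 1)/(N + 1) ≤ 1`, which is also the
`L¹` norm since `ρ_ℓ ≥ 0`.
-/

open MeasureTheory

lemma sub_eq_mul_of_hasDerivAt {zl zr y vl vr : ℝ → ℝ} {ℓ t : ℝ} (hℓ : ℓ ≠ 0)
    (hzl : ∀ s, 0 ≤ s → HasDerivAt zl (vl s) s) (hzr : ∀ s, 0 ≤ s → HasDerivAt zr (vr s) s)
    (hy : ∀ s, 0 ≤ s → HasDerivAt y ((vr s - vl s) / ℓ) s)
    (h0 : zr 0 - zl 0 = ℓ * y 0) (ht : 0 ≤ t) :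
    zr t - zl t = ℓ * y t := by
  set gap : ℝ → ℝ := fun s => zr s - zl s - ℓ * y s
  have hgap : ∀ s, 0 ≤ s → HasDerivAt gap 0 s := fun s hs => by
    refine (((hzr s hs).sub (hzl s hs)).sub ((hy s hs).const_mul ℓ)).congr_deriv ?_
    rw [mul_div_cancel₀ _ hℓ]
    ring
  have hconst : gap t = gap 0 :=
    constant_of_has_deriv_right_zero (fun s hs => (hgap s hs.1).continuousAt.continuousWithinAt)
      (fun s hs => (hgap s hs.1).hasDerivWithinAt) t ⟨ht, le_rfl⟩
  simp only [gap] at hconst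
  linarith

lemma integral_sum_mul_indicator_Ico {ι : Type*} (s : Finset ι) (c a b : ι → ℝ)
    (hab : ∀ i ∈ s, a i ≤ b i) :
    ∫ x, ∑ i ∈ s, c i * (Set.Ico (a i) (b i)).indicator (fun _ => (1 : ℝ)) x =
      ∑ i ∈ s, c i * (b i - a i) := by
  have hint : ∀ i ∈ s,
      Integrable (fun x => c i * (Set.Ico (a i) (b i)).indicator (fun _ => (1 : ℝ)) x) :=
    fun i _ => ((integrable_indicator_iff measurableSet_Ico).mpr
      (integrableOn_const measure_Ico_lt_top.ne)).const_mul (c i)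
  rw [integral_finsetSum s hint]
  refine Finset.sum_congr rfl fun i hi => ?_
  rw [integral_const_mul, integral_indicator_const _ measurableSet_Ico,
    Real.volume_real_Ico_of_le (hab i hi), smul_eq_mul, mul_one]

lemma ftl_gap_eq (N : ℕ) (ℓ : ℝ) (hℓ : ℓ ≠ 0) (V : ℝ → ℝ) (y z : ℕ → ℝ → ℝ)
    (hODE : ∀ i ∈ Finset.Icc 1 (N-1), ∀ t : ℝ, 0 ≤ t →
      HasDerivAt (y i) (((if i + 1 = N then (1:ℝ) else V (y (i+1) t)) - V (y i t)) / ℓ) t)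
    (hzODE : ∀ i ∈ Finset.range N, ∀ t : ℝ, 0 ≤ t →
      HasDerivAt (z i) (if i + 1 = N then (1:ℝ) else V (y (i+1) t)) t)
    (hz_init : ∀ i ∈ Finset.Icc 1 (N-1), z i 0 - z (i-1) 0 = ℓ * y i 0)
    {i : ℕ} (hi : i ∈ Finset.Icc 1 (N-1)) {t : ℝ} (ht : 0 ≤ t) :
    z i t - z (i-1) t = ℓ * y i t := by
  obtain ⟨hi1, hiN⟩ := Finset.mem_Icc.mp hi
  have hzl : ∀ s, 0 ≤ s → HasDerivAt (z (i-1)) (V (y i s)) s := fun s hs => by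
    convert hzODE (i-1) (Finset.mem_range.mpr (by omega)) s hs using 1
    rw [if_neg (by omega), Nat.sub_add_cancel hi1]
  exact sub_eq_mul_of_hasDerivAt hℓ hzl (hzODE i (Finset.mem_range.mpr (by omega)))
    (hODE i hi) (hz_init i hi) ht

theorem ftl_mass_conservation_general
    (N : ℕ) (hN : 2 ≤ N)
    (ℓ : ℝ) (hℓ : ℓ = 1 / (N + 1))
    (V : ℝ → ℝ)
    (y : ℕ → ℝ → ℝ)
    (hy_ge1 : ∀ i ∈ Finset.Icc 1 (N-1), ∀ t : ℝ, 0 ≤ t → 1 ≤ y i t)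
    (hODE : ∀ i ∈ Finset.Icc 1 (N-1), ∀ t : ℝ, 0 ≤ t →
      HasDerivAt (y i) (((if i + 1 = N then (1:ℝ) else V (y (i+1) t)) - V (y i t)) / ℓ) t)
    (z : ℕ → ℝ → ℝ)
    (hzODE : ∀ i ∈ Finset.range N, ∀ t : ℝ, 0 ≤ t →
      HasDerivAt (z i) (if i + 1 = N then (1:ℝ) else V (y (i+1) t)) t)
    (hz_init : ∀ i ∈ Finset.Icc 1 (N-1), z i 0 - z (i-1) 0 = ℓ * y i 0)
    (ρℓ : ℝ → ℝ → ℝ)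
    (hρℓ : ∀ t x : ℝ, ρℓ t x =
      ∑ i ∈ Finset.Icc 1 (N-1),
        (1 / y i t) * Set.indicator (Set.Ico (z (i-1) t) (z i t)) (fun _ => (1:ℝ)) x) :
    ∀ t : ℝ, 0 ≤ t →
      (∫ x : ℝ, ρℓ t x) = ((N : ℝ) - 1) * ℓ ∧
      (∫ x : ℝ, |ρℓ t x|) ≤ 1 := by
  intro t ht
  have hℓpos : 0 < ℓ := by rw [hℓ]; positivity
  have hy_pos : ∀ i ∈ Finset.Icc 1 (N-1), 0 < y i t := fun i hi =>
    one_pos.trans_le (hy_ge1 i hi t ht)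
  have hgap : ∀ i ∈ Finset.Icc 1 (N-1), z i t - z (i-1) t = ℓ * y i t := fun i hi =>
    ftl_gap_eq N ℓ hℓpos.ne' V y z hODE hzODE hz_init hi ht
  have hmass : (∫ x, ρℓ t x) = ((N : ℝ) - 1) * ℓ := by
    simp_rw [hρℓ t]
    rw [integral_sum_mul_indicator_Ico _ _ _ _ fun i hi => by
      nlinarith [hgap i hi, hy_pos i hi]]
    rw [Finset.sum_congr rfl fun i hi => by
      rw [hgap i hi, one_div_mul_eq_div, mul_div_cancel_right₀ _ (hy_pos i hi).ne']]
    rw [Finset.sum_const, Nat.card_Icc, nsmul_eq_mul, Nat.add_sub_cancel,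
      Nat.cast_sub (by omega), Nat.cast_one]
  have hρ_nonneg : ∀ x, 0 ≤ ρℓ t x := fun x => by
    rw [hρℓ]
    exact Finset.sum_nonneg fun i hi =>
      mul_nonneg (one_div_pos.mpr (hy_pos i hi)).le (Set.indicator_nonneg (by simp) x)
  refine ⟨hmass, ?_⟩
  simp_rw [abs_of_nonneg (hρ_nonneg _), hmass, hℓ]
  rw [mul_one_div, div_le_one (by positivity)]
  linarith

/-- **Conservation of mass (beginning of the proof of Theorem 3.1).**
Context: `N ≥ 2`, `ℓ = 1/(N+1)`; `V : [1,∞) → [0,1]` is `C¹`, nondecreasing, `V 1 = 0`;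
`y_1, …, y_{N-1} : [0,∞) → [1,∞)` solve `ẏ_i = (V_{i+1} - V_i)/ℓ`, `V_i = V (y_i)`,
`V_N = 1`; `ρ_i = 1/y_i`; the positions (`z i` denotes `z_{i+1/2}`) satisfy
`ż_{i-1/2} = V_i`, `z_{i+1/2}(0) - z_{i-1/2}(0) = ℓ y_i(0)`; and
`ρ_ℓ(t,x) = ∑_{i=1}^{N-1} ρ_i(t) 1_{[z_{i-1/2}(t), z_{i+1/2}(t))}(x)`.
Statement: for every `t ≥ 0`, `∫_ℝ ρ_ℓ(t,x) dx = (N-1)ℓ`; in particular the total mass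
is conserved in time and `‖ρ_ℓ(t,·)‖_{L¹(ℝ)} ≤ 1`. -/
theorem ftl_mass_conservation
    (N : ℕ) (hN : 2 ≤ N)
    (ℓ : ℝ) (hℓ : ℓ = 1 / (N + 1))
    (V : ℝ → ℝ)
    (hV_C1 : ContDiffOn ℝ 1 V (Set.Ici 1))
    (hV_mono : MonotoneOn V (Set.Ici 1))
    (hV_range : ∀ x ∈ Set.Ici (1:ℝ), V x ∈ Set.Icc (0:ℝ) 1)
    (hV1 : V 1 = 0)
    (y : ℕ → ℝ → ℝ)
    (hy_ge1 : ∀ i ∈ Finset.Icc 1 (N-1), ∀ t : ℝ, 0 ≤ t → 1 ≤ y i t)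
    (hODE : ∀ i ∈ Finset.Icc 1 (N-1), ∀ t : ℝ, 0 ≤ t →
      HasDerivAt (y i) (((if i + 1 = N then (1:ℝ) else V (y (i+1) t)) - V (y i t)) / ℓ) t)
    (z : ℕ → ℝ → ℝ)
    (hzODE : ∀ i ∈ Finset.range N, ∀ t : ℝ, 0 ≤ t →
      HasDerivAt (z i) (if i + 1 = N then (1:ℝ) else V (y (i+1) t)) t)
    (hz_init : ∀ i ∈ Finset.Icc 1 (N-1), z i 0 - z (i-1) 0 = ℓ * y i 0)
    (ρℓ : ℝ → ℝ → ℝ)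
    (hρℓ : ∀ t x : ℝ, ρℓ t x =
      ∑ i ∈ Finset.Icc 1 (N-1),
        (1 / y i t) * Set.indicator (Set.Ico (z (i-1) t) (z i t)) (fun _ => (1:ℝ)) x) :
    ∀ t : ℝ, 0 ≤ t →
      (∫ x : ℝ, ρℓ t x) = ((N : ℝ) - 1) * ℓ ∧
      (∫ x : ℝ, |ρℓ t x|) ≤ 1 :=
  ftl_mass_conservation_general N hN ℓ hℓ V y hy_ge1 hODE z hzODE hz_init ρℓ hρℓ
end

section
/- Let ρ₀ : ℝ → [0,1] be integrable, of bounded variation, with ∫_ℝ ρ₀(z) dz = 1. Let N ≥ 2, ℓ = 1/(N+1), and let z_{−1/2} := −∞ and, inductively for i = 0,…,N−1, let z_{i+1/2} be the infimum of all values z such that ∫_{z_{i−1/2}}^{z} ρ₀ = ℓ. Define ρ_i := ℓ / (z_{i+1/2} − z_{i−1/2}) for i = 1,…,N−1 and ρ_N := 0. Then Σ_{i=1}^{N−1} |ρ_{i+1} − ρ_i| ≤ |ρ₀|_{BV}, where |ρ₀|_{BV} denotes the total variation of ρ₀ on ℝ. -/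
/-!
Parametrise every cell `[a, b]` by `t ∈ [0, 1]`, so that the average of `ρ₀` over it is
`∫₀¹ ρ₀ (a + t (b - a)) dt`. The difference of the averages over two consecutive cells is then the
integral in `t` of a difference of values of `ρ₀` at two points, and for each fixed `t` these points
increase along the cells; hence the sum of these differences is at most `∫₀¹ |ρ₀|_BV dt`.
The final density `ρ_N = 0` is the average over a degenerate cell `{y}` with `y` far to the right,
up to `ρ₀ y`, which can be made arbitrarily small because `ρ₀` is integrable.
-/

open MeasureTheory

noncomputable def cellAverage (f : ℝ → ℝ) (a b : ℝ) : ℝ :=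
  ∫ t in (0 : ℝ)..1, f (AffineMap.lineMap a b t)

theorem cellAverage_self (f : ℝ → ℝ) (a : ℝ) : cellAverage f a a = f a := by
  simp [cellAverage]

theorem cellAverage_of_ne (f : ℝ → ℝ) {a b : ℝ} (hab : a ≠ b) :
    cellAverage f a b = (∫ x in a..b, f x) / (b - a) := by
  have hba : b - a ≠ 0 := sub_ne_zero.2 hab.symm
  simp only [cellAverage, AffineMap.lineMap_apply_ring', mul_comm _ (b - a),
    intervalIntegral.integral_comp_mul_add f hba, mul_zero, mul_one, zero_add, sub_add_cancel,
    smul_eq_mul]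
  field_simp

theorem BoundedVariationOn.intervalIntegrable {f : ℝ → ℝ} {a b : ℝ}
    (hf : BoundedVariationOn f (Set.uIcc a b)) : IntervalIntegrable f volume a b := by
  obtain ⟨p, q, hp, hq, rfl⟩ := hf.locallyBoundedVariationOn.exists_monotoneOn_sub_monotoneOn
  exact hp.intervalIntegrable.sub hq.intervalIntegrable

theorem BoundedVariationOn.comp_lineMap {E : Type*} [PseudoEMetricSpace E] {f : ℝ → E}
    (hf : BoundedVariationOn f Set.univ) (a b : ℝ) (s : Set ℝ) :
    BoundedVariationOn (fun t => f (AffineMap.lineMap a b t)) s := by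
  refine ne_top_of_le_ne_top hf ?_
  rcases le_total a b with hab | hba
  · exact eVariationOn.comp_le_of_monotoneOn f _ ((AffineMap.lineMap_mono hab).monotoneOn _)
      (Set.mapsTo_univ _ _)
  · exact eVariationOn.comp_le_of_antitoneOn f _ ((AffineMap.lineMap_anti hba).antitoneOn _)
      (Set.mapsTo_univ _ _)

theorem BoundedVariationOn.sum_abs_sub_le {α : Type*} [LinearOrder α] {f : α → ℝ} {s : Set α}
    (hf : BoundedVariationOn f s) {u : ℕ → α} (hu : Monotone u) (us : ∀ i, u i ∈ s) (n : ℕ) :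
    ∑ i ∈ Finset.range n, |f (u (i + 1)) - f (u i)| ≤ (eVariationOn f s).toReal := by
  have h := ENNReal.toReal_mono hf (eVariationOn.sum_le (f := f) (n := n) hu us)
  rwa [ENNReal.toReal_sum fun i _ => edist_ne_top _ _] at h

theorem sum_abs_sub_cellAverage_le {f : ℝ → ℝ} (hf : BoundedVariationOn f Set.univ)
    {a b : ℕ → ℝ} (ha : Monotone a) (hb : Monotone b) (n : ℕ) :
    ∑ k ∈ Finset.range n, |cellAverage f (a (k + 1)) (b (k + 1)) - cellAverage f (a k) (b k)|
      ≤ (eVariationOn f Set.univ).toReal := by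
  set V := (eVariationOn f Set.univ).toReal
  set g : ℕ → ℝ → ℝ := fun k t => f (AffineMap.lineMap (a k) (b k) t)
  have hg (k : ℕ) : IntervalIntegrable (g k) volume 0 1 :=
    (hf.comp_lineMap _ _ _).intervalIntegrable
  have hdiff (k : ℕ) : IntervalIntegrable (fun t => |g (k + 1) t - g k t|) volume 0 1 :=
    ((hg (k + 1)).sub (hg k)).abs
  have hchain : ∀ t ∈ Set.Icc (0 : ℝ) 1, ∑ k ∈ Finset.range n, |g (k + 1) t - g k t| ≤ V :=
    fun t ht => hf.sum_abs_sub_le (fun j k hjk =>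
      lineMap_mono_endpoints (ha hjk) (hb hjk) ht.1 ht.2) (fun _ => Set.mem_univ _) n
  calc _ = ∑ k ∈ Finset.range n, |∫ t in (0 : ℝ)..1, (g (k + 1) t - g k t)| := by
        simp only [cellAverage, intervalIntegral.integral_sub (hg _) (hg _), g]
    _ ≤ ∑ k ∈ Finset.range n, ∫ t in (0 : ℝ)..1, |g (k + 1) t - g k t| :=
        Finset.sum_le_sum fun k _ => intervalIntegral.abs_integral_le_integral_abs zero_le_one
    _ = ∫ t in (0 : ℝ)..1, ∑ k ∈ Finset.range n, |g (k + 1) t - g k t| :=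
        (intervalIntegral.integral_finsetSum fun k _ => hdiff k).symm
    _ ≤ ∫ _ in (0 : ℝ)..1, V := by
        refine intervalIntegral.integral_mono_on zero_le_one ?_ intervalIntegrable_const hchain
        simpa only [Finset.sum_fn] using IntervalIntegrable.sum _ fun k _ => hdiff k
    _ = V := by simp

theorem lt_and_integral_eq_of_isGLB {f : ℝ → ℝ} (hf : Integrable f) (hf0 : ∀ x, 0 ≤ f x)
    {a b ℓ : ℝ} (hℓ : 0 < ℓ) (h : IsGLB {w | ∫ x in Set.Ioc a w, f x = ℓ} b) :
    a < b ∧ ∫ x in a..b, f x = ℓ := by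
  have hlt {w : ℝ} (hw : ∫ x in a..w, f x = ℓ) : a < w := by
    by_contra! hwa
    have := intervalIntegral.integral_nonneg_of_forall (μ := volume) hwa hf0
    rw [intervalIntegral.integral_symm] at this
    linarith
  have hset : {w | ∫ x in Set.Ioc a w, f x = ℓ} = {w | ∫ x in a..w, f x = ℓ} := by
    ext w
    refine ⟨fun hw => ?_, fun hw => ?_⟩
    · have haw : a < w := by
        by_contra! hwa
        simp [Set.Ioc_eq_empty_of_le hwa, hℓ.ne] at hw
      rwa [Set.mem_ofPred_eq, intervalIntegral.integral_of_le haw.le]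
    · rwa [Set.mem_ofPred_eq, ← intervalIntegral.integral_of_le (hlt hw).le]
  rw [hset] at h
  have hne : {w | ∫ x in a..w, f x = ℓ}.Nonempty :=
    Set.nonempty_iff_ne_empty.2 fun he => not_isTop b (isGLB_empty_iff.1 (he ▸ h))
  have hb : ∫ x in a..b, f x = ℓ :=
    h.mem_of_isClosed hne (isClosed_eq (hf.continuous_primitive a) continuous_const)
  exact ⟨hlt hb, hb⟩

theorem zero_mem_closure_image_Ioi {E : Type*} [NormedAddCommGroup E] {f : ℝ → E}
    (hf : Integrable f) (M : ℝ) : (0 : E) ∈ closure (f '' Set.Ioi M) := by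
  rw [Metric.mem_closure_iff]
  intro ε hε
  by_contra! h
  have hconst : IntegrableOn (fun _ => ε) (Set.Ioi M) volume := by
    refine Integrable.mono' hf.norm.integrableOn aestronglyMeasurable_const ?_
    rw [ae_restrict_iff' measurableSet_Ioi]
    exact ae_of_all _ fun x hx => by
      simpa [abs_of_pos hε] using h _ (Set.mem_image_of_mem f hx)
  simp [integrableOn_const_iff, hε.ne', Real.volume_Ioi] at hconst

theorem sum_abs_sub_cell_densities_le {f : ℝ → ℝ} (hf : BoundedVariationOn f Set.univ)
    {N : ℕ} {ℓ : ℝ} {z : ℕ → ℝ}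
    (hcell : ∀ i ∈ Finset.Icc 1 (N - 1), z (i - 1) < z i ∧ ∫ x in z (i - 1)..z i, f x = ℓ)
    {y : ℝ} (hy : z (N - 1) < y) :
    ∑ i ∈ Finset.Icc 1 (N - 1),
        |(if i + 1 = N then f y else ℓ / (z (i + 1) - z i)) - ℓ / (z i - z (i - 1))|
      ≤ (eVariationOn f Set.univ).toReal := by
  -- cell `k` is `[e (σ k), e k]`: it is `[z (k - 1), z k]` for `k < N`, then `[y, y]`
  set e : ℕ → ℝ := fun k => if k < N then z k else y
  set σ : ℕ → ℕ := fun k => if k < N then k - 1 else k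
  have he : Monotone e := by
    refine monotone_nat_of_le_succ fun k => ?_
    simp only [e]
    split_ifs
    · simpa using (hcell (k + 1) (Finset.mem_Icc.2 ⟨by omega, by omega⟩)).1.le
    · obtain rfl : k = N - 1 := by omega
      exact hy.le
    · omega
    · exact le_rfl
  have hσ : Monotone σ := fun j k hjk => by simp only [σ]; split_ifs <;> omega
  have hcellAverage : ∀ i ∈ Finset.Icc 1 (N - 1),
      cellAverage f (e (σ i)) (e i) = ℓ / (z i - z (i - 1)) := by
    intro i hi
    have hiN : i < N := by rw [Finset.mem_Icc] at hi; omega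
    obtain ⟨hlt, hmass⟩ := hcell i hi
    simp only [e, σ, if_pos hiN, if_pos (show i - 1 < N by omega)]
    rw [cellAverage_of_ne f hlt.ne, hmass]
  have hterm : ∀ i ∈ Finset.Icc 1 (N - 1),
      |(if i + 1 = N then f y else ℓ / (z (i + 1) - z i)) - ℓ / (z i - z (i - 1))|
        = |cellAverage f (e (σ (i + 1))) (e (i + 1)) - cellAverage f (e (σ i)) (e i)| := by
    intro i hi
    rw [hcellAverage i hi]
    split_ifs with hN
    · simp [e, σ, hN, cellAverage_self]
    · have hi' : i + 1 ∈ Finset.Icc 1 (N - 1) := by rw [Finset.mem_Icc] at hi ⊢; omega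
      rw [hcellAverage (i + 1) hi', Nat.add_sub_cancel]
  calc _ = ∑ i ∈ Finset.Icc 1 (N - 1),
          |cellAverage f (e (σ (i + 1))) (e (i + 1)) - cellAverage f (e (σ i)) (e i)| :=
        Finset.sum_congr rfl hterm
    _ ≤ ∑ i ∈ Finset.range N,
          |cellAverage f (e (σ (i + 1))) (e (i + 1)) - cellAverage f (e (σ i)) (e i)| :=
        Finset.sum_le_sum_of_subset_of_nonneg
          (fun i hi => by rw [Finset.mem_Icc] at hi; rw [Finset.mem_range]; omega)
          fun _ _ _ => abs_nonneg _
    _ ≤ _ := sum_abs_sub_cellAverage_le hf (he.comp hσ) he N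

theorem ftl_initial_tv_bound_general
    (ρ₀ : ℝ → ℝ)
    (hρ₀_range : ∀ x : ℝ, ρ₀ x ∈ Set.Icc (0:ℝ) 1)
    (hρ₀_int : Integrable ρ₀)
    (hρ₀_bv : eVariationOn ρ₀ Set.univ ≠ ⊤)
    (N : ℕ)
    (ℓ : ℝ) (hℓ : ℓ = 1 / (N + 1))
    (z : ℕ → ℝ)
    (hz : ∀ i ∈ Finset.Icc 1 (N-1),
      IsGLB {w : ℝ | ∫ x in Set.Ioc (z (i-1)) w, ρ₀ x = ℓ} (z i)) :
    ∑ i ∈ Finset.Icc 1 (N-1),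
        |(if i + 1 = N then (0:ℝ) else ℓ / (z (i+1) - z i)) - ℓ / (z i - z (i-1))|
      ≤ (eVariationOn ρ₀ Set.univ).toReal := by
  have hℓ_pos : 0 < ℓ := by rw [hℓ]; positivity
  have hcell (i : ℕ) (hi : i ∈ Finset.Icc 1 (N - 1)) :
      z (i - 1) < z i ∧ ∫ x in z (i - 1)..z i, ρ₀ x = ℓ :=
    lt_and_integral_eq_of_isGLB hρ₀_int (fun x => (hρ₀_range x).1) hℓ_pos (hz i hi)
  -- the bound holds with `ρ_N` replaced by any value `ρ₀ y`, `y > z (N - 1)`; let `ρ₀ y → 0`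
  have hclosed : IsClosed {c : ℝ | ∑ i ∈ Finset.Icc 1 (N - 1),
      |(if i + 1 = N then c else ℓ / (z (i + 1) - z i)) - ℓ / (z i - z (i - 1))|
        ≤ (eVariationOn ρ₀ Set.univ).toReal} :=
    isClosed_le (continuous_finsetSum _ fun i _ =>
      ((continuous_if_const _ (fun _ => continuous_id) fun _ => continuous_const).sub
        continuous_const).abs) continuous_const
  refine closure_minimal ?_ hclosed (zero_mem_closure_image_Ioi hρ₀_int (z (N - 1)))
  rintro _ ⟨y, hy, rfl⟩
  exact sum_abs_sub_cell_densities_le hρ₀_bv hcell hy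

/-- **Initial discrete total variation bound (following Lemma 2.2).**
Let `ρ₀ : ℝ → [0,1]` be integrable and of bounded variation with `∫ ρ₀ = 1`.
Let `N ≥ 2`, `ℓ = 1/(N+1)`, and construct the equi-mass partition points
(`z i` denotes `z_{i+1/2}`, `0 ≤ i ≤ N-1`, and `z_{-1/2} = -∞`): `z 0` is the
infimum of all `w` with `∫_{-∞}^w ρ₀ = ℓ`, and inductively `z i` is the infimum
of all `w` with `∫_{z (i-1)}^w ρ₀ = ℓ`.  With `ρ_i = ℓ/(z_{i+1/2} - z_{i-1/2})`
for `1 ≤ i ≤ N-1` and `ρ_N = 0`, the discrete total variation is bounded: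
`∑_{i=1}^{N-1} |ρ_{i+1} - ρ_i| ≤ |ρ₀|_{BV}`. -/
theorem ftl_initial_tv_bound
    (ρ₀ : ℝ → ℝ)
    (hρ₀_range : ∀ x : ℝ, ρ₀ x ∈ Set.Icc (0:ℝ) 1)
    (hρ₀_int : Integrable ρ₀)
    (hρ₀_mass : ∫ x : ℝ, ρ₀ x = 1)
    (hρ₀_bv : eVariationOn ρ₀ Set.univ ≠ ⊤)
    (N : ℕ) (hN : 2 ≤ N)
    (ℓ : ℝ) (hℓ : ℓ = 1 / (N + 1))
    (z : ℕ → ℝ)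
    (hz0 : IsGLB {w : ℝ | ∫ x in Set.Iic w, ρ₀ x = ℓ} (z 0))
    (hz : ∀ i ∈ Finset.Icc 1 (N-1),
      IsGLB {w : ℝ | ∫ x in Set.Ioc (z (i-1)) w, ρ₀ x = ℓ} (z i)) :
    ∑ i ∈ Finset.Icc 1 (N-1),
        |(if i + 1 = N then (0:ℝ) else ℓ / (z (i+1) - z i)) - ℓ / (z i - z (i-1))|
      ≤ (eVariationOn ρ₀ Set.univ).toReal :=
  ftl_initial_tv_bound_general ρ₀ hρ₀_range hρ₀_int hρ₀_bv N ℓ hℓ z hz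
end
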